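/- For any lattice Λ in ℝ^n and any i-dimensional lattice subspace L of Λ, the determinant of the sublattice Λ ∩ L equals the determinant of the dual lattice intersected with the orthogonal complement L^⊥ times the determinant of Λ, i.e., det(Λ ∩ L) = det(Λ* ∩ L^⊥) · det(Λ). -/

import Mathlib

open scoped RealInnerProductSpace Pointwise
open MeasureTheory Filter

noncomputable section

abbrev Euc (n : ℕ) := EuclideanSpace ℝ (Fin n)

/-- The set of all integer combinations of the family of vectors `v`. -/
def intSpan {n : ℕ} {ι : Type} [Fintype ι] (v : ι → Euc n) : Set (Euc n) :=
  {x | ∃ z : ι → ℤ, x = ∑ j, (z j : ℝ) • v j}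

/-- `Λ` is a (full-rank) lattice in `ℝⁿ`: the integer span of a basis of `ℝⁿ`. -/
def IsLattice {n : ℕ} (Λ : Set (Euc n)) : Prop :=
  ∃ b : Module.Basis (Fin n) ℝ (Euc n), Λ = intSpan ⇑b

/-- Gram determinant of a family of vectors. -/
def gramDet {n : ℕ} {ι : Type} [Fintype ι] [DecidableEq ι] (v : ι → Euc n) : ℝ :=
  Matrix.det (Matrix.of fun j k : ι => ⟪v j, v k⟫)

/-- The determinant (covolume) of the lattice with ℤ-basis `v`:
the square root of the Gram determinant. -/
def latDet {n : ℕ} {ι : Type} [Fintype ι] [DecidableEq ι] (v : ι → Euc n) : ℝ :=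
  Real.sqrt (gramDet v)

/-- `v` is a ℤ-basis of the set `S`: a linearly independent family whose
integer span is `S`. -/
def IsZBasis {n : ℕ} {ι : Type} [Fintype ι] (v : ι → Euc n) (S : Set (Euc n)) : Prop :=
  LinearIndependent ℝ v ∧ S = intSpan v

/-- The determinant (covolume) of a rank-`i` lattice `S` (independent of the
chosen ℤ-basis). -/
def detOf {n : ℕ} (i : ℕ) (S : Set (Euc n)) : ℝ :=
  sInf {d | ∃ v : Fin i → Euc n, IsZBasis v S ∧ d = latDet v}

/-- The dual (polar) lattice of `Λ`. -/
def dualLattice {n : ℕ} (Λ : Set (Euc n)) : Set (Euc n) :=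
  {y | ∀ x ∈ Λ, ∃ m : ℤ, ⟪x, y⟫ = (m : ℝ)}

/-- `L` is an `i`-dimensional lattice plane of `Λ`: `L` has dimension `i` and
`Λ ∩ L` spans `L`. -/
def IsLatticePlane {n : ℕ} (Λ : Set (Euc n)) (i : ℕ) (L : Submodule ℝ (Euc n)) : Prop :=
  Module.finrank ℝ L = i ∧ Submodule.span ℝ (Λ ∩ (L : Set (Euc n))) = L

/-- Orthogonal projection of a set onto the subspace `L`. -/
def projTo {n : ℕ} (L : Submodule ℝ (Euc n)) (S : Set (Euc n)) : Set (Euc n) :=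
  (fun x => ((Submodule.orthogonalProjectionOnto L x : L) : Euc n)) '' S

/-- Rankin's invariant (in the normalization `τ(n,i)` of Henk's paper). -/
def rankin (n i : ℕ) : ℝ :=
  sSup {r | ∃ Λ : Set (Euc n), IsLattice Λ ∧
    r = sInf {s | ∃ L : Submodule ℝ (Euc n), IsLatticePlane Λ i L ∧
      s = detOf i (Λ ∩ (L : Set (Euc n))) ^ ((1:ℝ)/i) / detOf n Λ ^ ((1:ℝ)/n)}}

/-- `S` is a packing set of `K`: distinct translates of `K` by elements of `S`
have disjoint interiors. -/
def IsPackingSet {n : ℕ} (K : Set (Euc n)) (S : Set (Euc n)) : Prop :=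
  ∀ b₁ ∈ S, ∀ b₂ ∈ S, b₁ ≠ b₂ → interior (b₁ +ᵥ K) ∩ interior (b₂ +ᵥ K) = ∅

/-- The packing radius `λ(K,Λ)`. -/
def packingRadius {n : ℕ} (K Λ : Set (Euc n)) : ℝ :=
  sSup {l : ℝ | 0 < l ∧ IsPackingSet (l • K) Λ}

/-- The covering radius `μ(K,Λ)`. -/
def coveringRadius {n : ℕ} (K Λ : Set (Euc n)) : ℝ :=
  sInf {m : ℝ | 0 < m ∧ Λ + m • K = Set.univ}

/-- `K` is a `0`-symmetric convex body with nonempty interior. -/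
def IsBody {n : ℕ} (K : Set (Euc n)) : Prop :=
  Convex ℝ K ∧ IsCompact K ∧ K = -K ∧ (interior K).Nonempty

/-- The density `δ(K)` of a densest lattice packing of `K`. -/
def packDensity {n : ℕ} (K : Set (Euc n)) : ℝ :=
  sSup {d | ∃ Λ : Set (Euc n), IsLattice Λ ∧ IsPackingSet K Λ ∧
    d = (volume K).toReal / detOf n Λ}

/-- The density `θ(K)` of a thinnest lattice covering of `K`. -/
def covDensity {n : ℕ} (K : Set (Euc n)) : ℝ :=
  sInf {d | ∃ Λ : Set (Euc n), IsLattice Λ ∧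
    d = (volume K).toReal * coveringRadius K Λ ^ n / detOf n Λ}

/-- Zong's simultaneous packing and covering constant `γ(K)`. -/
def gammaSim {n : ℕ} (K : Set (Euc n)) : ℝ :=
  sInf {r | ∃ Λ : Set (Euc n), IsLattice Λ ∧ r = coveringRadius K Λ / packingRadius K Λ}

/-- The `i`-th covering minimum `μᵢ(K,Λ)` of Kannan and Lovász. -/
def covMin {n : ℕ} (i : ℕ) (K Λ : Set (Euc n)) : ℝ :=
  sInf {m : ℝ | 0 < m ∧ ∀ A : AffineSubspace ℝ (Euc n), (A : Set (Euc n)).Nonempty →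
    Module.finrank ℝ A.direction = n - i → ((Λ + m • K) ∩ (A : Set (Euc n))).Nonempty}

/-- The generalized simultaneous constant `γᵢ(K)`. -/
def gammaI {n : ℕ} (i : ℕ) (K : Set (Euc n)) : ℝ :=
  sInf {r | ∃ Λ : Set (Euc n), IsLattice Λ ∧ r = covMin i K Λ / packingRadius K Λ}

/-- The projection functional `ρᵢ(K)`. -/
def rhoI {n : ℕ} (i : ℕ) (K : Set (Euc n)) : ℝ :=
  sSup {r | ∃ A : (Euc n) ≃ₗ[ℝ] (Euc n),
    r = sInf {s | ∃ L : Submodule ℝ (Euc n), Module.finrank ℝ L = i ∧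
      s = (volume (⇑A '' K)).toReal ^ ((1:ℝ)/n) /
        ((MeasureTheory.Measure.hausdorffMeasure (i:ℝ) (projTo L (⇑A '' K))).toReal) ^ ((1:ℝ)/i)}}

/-- Length of a shortest nonzero vector of `Λ`. -/
def lambdaOne {n : ℕ} (Λ : Set (Euc n)) : ℝ :=
  sInf {r | ∃ x ∈ Λ, x ≠ 0 ∧ r = ‖x‖}

/-- The (normalized) Hermite constant `τ(n,1)`. -/
def hermite (n : ℕ) : ℝ :=
  sSup {r | ∃ Λ : Set (Euc n), IsLattice Λ ∧ r = lambdaOne Λ / detOf n Λ ^ ((1:ℝ)/n)}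

/-- Volume of the `d`-dimensional unit ball. -/
def kappa (d : ℕ) : ℝ := Real.pi ^ ((d:ℝ)/2) / Real.Gamma ((d:ℝ)/2 + 1)

/-- Upper density of the arrangement `S + K`. -/
def setDensity {n : ℕ} (K S : Set (Euc n)) : ℝ :=
  Filter.limsup (fun r : ℝ =>
    (volume ((S + K) ∩ Metric.ball (0 : Euc n) r)).toReal /
    (volume (Metric.ball (0 : Euc n) r)).toReal) Filter.atTop

/-- The density `δ_T(K)` of a densest translative packing of `K`. -/
def transPackDensity {n : ℕ} (K : Set (Euc n)) : ℝ :=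
  sSup {d | ∃ S : Set (Euc n), IsPackingSet K S ∧ d = setDensity K S}

/-!
Choose a ℤ-basis `u` of `Λ` whose first `i` vectors form a ℤ-basis of `Λ ∩ L`; it exists because
`Λ ∩ L` is saturated in `Λ` (Smith normal form). If `G` is the Gram matrix of `u`, the dual basis
`u G⁻¹` is a ℤ-basis of `Λ*`, its last `n - i` vectors form a ℤ-basis of `Λ* ∩ L^⊥`, and their
Gram matrix is the lower right block of `G⁻¹`. Jacobi's complementary minor identity
`det G₁₁ = det G · det (G⁻¹)₂₂` is then the claim, squared.
-/

open Matrix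

section MulMatrix

variable {R M : Type*} [CommSemiring R] [AddCommMonoid M] [Module R M]
  {ι κ σ : Type*} [Fintype ι]

def mulMatrix (v : ι → M) (A : Matrix ι κ R) : κ → M :=
  fun k => ∑ j, A j k • v j

lemma mulMatrix_one [DecidableEq ι] (v : ι → M) : mulMatrix v (1 : Matrix ι ι R) = v := by
  ext k
  simp [mulMatrix, one_apply]

lemma mulMatrix_mulMatrix [Fintype κ] (v : ι → M) (A : Matrix ι κ R) (B : Matrix κ σ R) :
    mulMatrix (mulMatrix v A) B = mulMatrix v (A * B) := by
  ext s
  simp only [mulMatrix, mul_apply, Finset.smul_sum, Finset.sum_smul, smul_smul]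
  rw [Finset.sum_comm]
  simp only [mul_comm]

lemma mulMatrix_injective {v : ι → M} (hv : LinearIndependent R v) :
    Function.Injective (mulMatrix v : Matrix ι κ R → κ → M) := by
  intro A B h
  ext j k
  exact Fintype.linearIndependent_iffₛ.mp hv _ _ (congrFun h k) j

end MulMatrix

section Gram

variable {E : Type*} [NormedAddCommGroup E] [InnerProductSpace ℝ E] {ι κ : Type*}

lemma inner_mulMatrix_right [Fintype ι] (u : ι → E) (A : Matrix ι κ ℝ) (j : ι) (k : κ) :
    ⟪u j, mulMatrix u A k⟫ = (gram ℝ u * A) j k := by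
  simp only [mulMatrix, inner_sum, real_inner_smul_right, mul_apply, gram_apply, mul_comm]

lemma gram_mulMatrix [Fintype ι] [Fintype κ] (u : ι → E) (A : Matrix ι κ ℝ) :
    gram ℝ (mulMatrix u A) = Aᵀ * gram ℝ u * A := by
  ext k l
  rw [gram_apply, Matrix.mul_assoc, mul_apply]
  conv_lhs => rw [mulMatrix, sum_inner]
  simp only [real_inner_smul_left, inner_mulMatrix_right, transpose_apply]

lemma gram_transpose (u : ι → E) : (gram ℝ u)ᵀ = gram ℝ u := by
  ext j k
  exact real_inner_comm _ _

lemma det_toBlocks₁₁_eq_det_mul_det_inv_toBlocks₂₂ {R : Type*} [Field R] [Fintype ι] [Fintype κ]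
    [DecidableEq ι] [DecidableEq κ] (G : Matrix (ι ⊕ κ) (ι ⊕ κ) R) (hG : IsUnit G.det) :
    G.toBlocks₁₁.det = G.det * (G⁻¹).toBlocks₂₂.det := by
  obtain ⟨A, B, C, D, rfl⟩ : ∃ A B C D, G = fromBlocks A B C D :=
    ⟨_, _, _, _, (fromBlocks_toBlocks G).symm⟩
  set X := (fromBlocks A B C D)⁻¹
  have hX : fromBlocks A B C D * fromBlocks X.toBlocks₁₁ X.toBlocks₁₂ X.toBlocks₂₁ X.toBlocks₂₂
      = fromBlocks 1 0 0 1 := by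
    rw [fromBlocks_toBlocks, mul_nonsing_inv _ hG, fromBlocks_one]
  obtain ⟨-, hX₁₂, -, hX₂₂⟩ := fromBlocks_inj.mp ((fromBlocks_multiply ..).symm.trans hX)
  have key : fromBlocks A B C D * fromBlocks 1 X.toBlocks₁₂ 0 X.toBlocks₂₂
      = fromBlocks A 0 C 1 := by
    simp [fromBlocks_multiply, hX₁₂, hX₂₂]
  simpa [det_fromBlocks_zero₂₁, det_fromBlocks_zero₁₂] using (congrArg det key).symm

end Gram

section IntSpan

variable {n : ℕ} {ι κ : Type} [Fintype ι]

lemma intSpan_eq_span (v : ι → Euc n) : intSpan v = Submodule.span ℤ (Set.range v) := by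
  ext x
  simp only [intSpan, Set.mem_ofPred_eq, SetLike.mem_coe,
    Submodule.mem_span_range_iff_exists_fun, Int.cast_smul_eq_zsmul, eq_comm]

lemma span_intSpan (v : ι → Euc n) :
    Submodule.span ℝ (intSpan v) = Submodule.span ℝ (Set.range v) := by
  rw [intSpan_eq_span, Submodule.span_span_of_tower]

lemma mem_intSpan_self (v : ι → Euc n) (j : ι) : v j ∈ intSpan v := by
  rw [intSpan_eq_span]
  exact Submodule.subset_span ⟨j, rfl⟩

lemma intSpan_comp_equiv [Fintype κ] (v : ι → Euc n) (e : κ ≃ ι) :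
    intSpan (v ∘ e) = intSpan v := by
  rw [intSpan_eq_span, intSpan_eq_span, Set.range_comp, e.range_eq_univ, Set.image_univ]

lemma exists_intMatrix_of_forall_mem_intSpan {v : ι → Euc n} {u : κ → Euc n}
    (h : ∀ k, u k ∈ intSpan v) :
    ∃ Z : Matrix ι κ ℤ, u = mulMatrix v (Z.map ((↑) : ℤ → ℝ)) := by
  choose z hz using h
  exact ⟨.of fun j k => z k j, funext fun k => by simpa [mulMatrix] using hz k⟩

/-- Two ℤ-bases of the same lattice differ by a unimodular matrix, which leaves the Gram
determinant unchanged. -/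
lemma gramDet_eq_of_intSpan_eq [DecidableEq ι] {v u : ι → Euc n} (hv : LinearIndependent ℝ v)
    (h : intSpan v = intSpan u) : gramDet u = gramDet v := by
  obtain ⟨Z, hZ⟩ := exists_intMatrix_of_forall_mem_intSpan (h ▸ mem_intSpan_self u)
  obtain ⟨Z', hZ'⟩ := exists_intMatrix_of_forall_mem_intSpan (h.symm ▸ mem_intSpan_self v)
  have hcast (W : Matrix ι ι ℤ) : (W.map ((↑) : ℤ → ℝ)).det = W.det :=
    ((Int.castRingHom ℝ).map_det W).symm
  have hZZ' : Z.map ((↑) : ℤ → ℝ) * Z'.map (↑) = 1 := by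
    apply mulMatrix_injective hv
    rw [← mulMatrix_mulMatrix, ← hZ, ← hZ', mulMatrix_one]
  have hunit : IsUnit Z.det := by
    refine IsUnit.of_mul_eq_one Z'.det (Int.cast_injective (α := ℝ) ?_)
    rw [Int.cast_mul, ← hcast, ← hcast, ← det_mul, hZZ', det_one, Int.cast_one]
  have hdet : (Z.map ((↑) : ℤ → ℝ)).det ^ 2 = 1 := by
    rw [hcast, ← Int.cast_pow, Int.isUnit_sq hunit, Int.cast_one]
  change (gram ℝ u).det = (gram ℝ v).det
  rw [hZ, gram_mulMatrix, det_mul, det_mul, det_transpose]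
  linear_combination (gram ℝ v).det * hdet

lemma latDet_eq_of_intSpan_eq [DecidableEq ι] {v u : ι → Euc n} (hv : LinearIndependent ℝ v)
    (h : intSpan v = intSpan u) : latDet u = latDet v := by
  rw [latDet, latDet, gramDet_eq_of_intSpan_eq hv h]

lemma linearIndependent_of_intSpan_eq [DecidableEq ι] {v u : ι → Euc n}
    (hv : LinearIndependent ℝ v) (h : intSpan v = intSpan u) : LinearIndependent ℝ u := by
  apply linearIndependent_of_det_gram_ne_zero
  change gramDet u ≠ 0
  rw [gramDet_eq_of_intSpan_eq hv h]
  exact (posDef_gram_of_linearIndependent hv).det_pos.ne'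

lemma card_eq_of_intSpan_eq [Fintype κ] {v : ι → Euc n} {u : κ → Euc n}
    (hv : LinearIndependent ℝ v) (hu : LinearIndependent ℝ u) (h : intSpan v = intSpan u) :
    Fintype.card ι = Fintype.card κ := by
  rw [← finrank_span_eq_card hv, ← finrank_span_eq_card hu, ← span_intSpan, ← span_intSpan, h]

lemma latDet_comp_equiv [DecidableEq ι] [Fintype κ] [DecidableEq κ] (v : ι → Euc n)
    (e : κ ≃ ι) :
    latDet (v ∘ e) = latDet v := by
  rw [latDet, latDet, gramDet, gramDet]
  exact congrArg Real.sqrt (det_submatrix_equiv_self e (gram ℝ v))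

lemma detOf_eq_latDet [DecidableEq ι] {k : ℕ} {S : Set (Euc n)} {v : ι → Euc n}
    (hv : IsZBasis v S) (hcard : Fintype.card ι = k) : detOf k S = latDet v := by
  obtain ⟨e⟩ : Nonempty (Fin k ≃ ι) := ⟨(Fintype.equivFinOfCardEq hcard).symm⟩
  have hset : {d | ∃ v' : Fin k → Euc n, IsZBasis v' S ∧ d = latDet v'} = {latDet v} := by
    ext d
    constructor
    · rintro ⟨v', hv', rfl⟩
      rw [← latDet_comp_equiv v e]
      exact latDet_eq_of_intSpan_eq (hv.1.comp e e.injective)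
        (by rw [intSpan_comp_equiv, ← hv.2, hv'.2])
    · rintro rfl
      exact ⟨v ∘ e, ⟨hv.1.comp e e.injective, by rw [intSpan_comp_equiv, hv.2]⟩,
        (latDet_comp_equiv v e).symm⟩
  rw [detOf, hset, csInf_singleton]

end IntSpan

lemma Function.Embedding.exists_sumEquiv_inl {m n : ℕ} (f : Fin m ↪ Fin n) :
    ∃ e : Fin m ⊕ Fin (n - m) ≃ Fin n, ∀ k, e (Sum.inl k) = f k := by
  classical
  have hcard : Fintype.card ((Set.range f)ᶜ : Set (Fin n)) = n - m := by
    rw [Fintype.card_compl_set, Set.card_range_of_injective f.injective, Fintype.card_fin,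
      Fintype.card_fin]
  exact ⟨(Equiv.sumCongr (Equiv.ofInjective f f.injective)
    (Fintype.equivFinOfCardEq hcard).symm).trans (Equiv.Set.sumCompl _), fun k => rfl⟩

section Adapted

variable {n : ℕ}

/-- In coordinates with respect to `b`, `Λ ∩ L` is a subgroup `N` of `ℤⁿ`, saturated because `L` is
a real subspace. So in a Smith normal form `bN k = a k • bM (f k)` the vectors `bM (f k)` already
lie in `N`, and `bM` reordered to put them first is the required basis. -/
lemma exists_zBasis_sum_inl (b : Module.Basis (Fin n) ℝ (Euc n)) (L : Submodule ℝ (Euc n)) :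
    ∃ (m : ℕ) (u : Fin m ⊕ Fin (n - m) → Euc n),
      IsZBasis u (intSpan ⇑b) ∧ IsZBasis (u ∘ Sum.inl) (intSpan ⇑b ∩ L) := by
  classical
  set φ := Fintype.linearCombination ℤ (⇑b)
  set N := (L.restrictScalars ℤ).comap φ
  obtain ⟨m, bM, bN, f, a, hsnf⟩ := N.smithNormalForm (Pi.basisFun ℤ (Fin n))
  set B : Fin n → Euc n := φ ∘ bM
  have hrange : intSpan b = LinearMap.range φ := by
    rw [intSpan_eq_span, Fintype.range_linearCombination]
  have hB_span : intSpan B = intSpan b := by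
    rw [hrange, intSpan_eq_span, Set.range_comp, ← Submodule.map_span, bM.span_eq,
      Submodule.map_top]
  have hB_li : LinearIndependent ℝ B :=
    linearIndependent_of_intSpan_eq b.linearIndependent hB_span.symm
  have hN : N ≤ Submodule.span ℤ (Set.range (bM ∘ f)) := by
    intro z hz
    rw [← show ((⟨z, hz⟩ : N) : Fin n → ℤ) = z from rfl, ← bN.sum_repr ⟨z, hz⟩]
    simp only [Submodule.coe_sum, Submodule.coe_smul, hsnf]
    exact Submodule.sum_mem _ fun k _ => Submodule.smul_mem _ _
      (Submodule.smul_mem _ _ (Submodule.subset_span ⟨k, rfl⟩))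
  have hB_mem (k : Fin m) : B (f k) ∈ L := by
    have ha : (a k : ℝ) ≠ 0 := by
      intro h
      apply bN.ne_zero k
      ext1
      rw [hsnf, Int.cast_eq_zero.mp h, zero_smul]
      rfl
    have hmem : φ (bN k) ∈ L := (bN k).2
    rwa [hsnf, map_zsmul, ← Int.cast_smul_eq_zsmul ℝ, Submodule.smul_mem_iff _ ha] at hmem
  have hB_inter : intSpan b ∩ L = intSpan (B ∘ f) := by
    apply subset_antisymm
    · rintro _ ⟨hx, hxL⟩
      rw [hrange] at hx
      obtain ⟨z, rfl⟩ := hx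
      change φ z ∈ intSpan (φ ∘ (bM ∘ f))
      rw [intSpan_eq_span, Set.range_comp, ← Submodule.map_span]
      exact Submodule.mem_map_of_mem (hN hxL)
    · rw [intSpan_eq_span]
      refine Set.subset_inter ?_ ?_
      · rw [← hB_span, intSpan_eq_span]
        exact Submodule.span_mono (Set.range_comp_subset_range f B)
      · exact Submodule.span_le (p := L.restrictScalars ℤ).mpr
          (Set.range_subset_iff.mpr hB_mem)
  obtain ⟨e, he⟩ := f.exists_sumEquiv_inl
  have hinl : B ∘ e ∘ Sum.inl = B ∘ f := funext fun k => congrArg B (he k)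
  refine ⟨m, B ∘ e, ⟨hB_li.comp e e.injective, by rw [intSpan_comp_equiv, hB_span]⟩, ?_⟩
  rw [Function.comp_assoc, hinl, hB_inter]
  exact ⟨hB_li.comp f f.injective, rfl⟩

lemma exists_zBasis_sum_inl_of_isZBasis {i : ℕ} (b : Module.Basis (Fin n) ℝ (Euc n))
    (L : Submodule ℝ (Euc n)) {v : Fin i → Euc n} (hv : IsZBasis v (intSpan ⇑b ∩ L)) :
    ∃ u : Fin i ⊕ Fin (n - i) → Euc n,
      IsZBasis u (intSpan ⇑b) ∧ IsZBasis (u ∘ Sum.inl) (intSpan ⇑b ∩ L) := by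
  obtain ⟨m, u, hu, hu_inl⟩ := exists_zBasis_sum_inl b L
  obtain rfl : m = i := by
    simpa using card_eq_of_intSpan_eq hu_inl.1 hv.1 (hu_inl.2.symm.trans hv.2)
  exact ⟨u, hu, hu_inl⟩

end Adapted

section DualFamily

variable {E : Type*} [NormedAddCommGroup E] [InnerProductSpace ℝ E] {ι : Type*}

lemma mem_orthogonal_span_range_iff {v : ι → E} {y : E} :
    y ∈ (Submodule.span ℝ (Set.range v))ᗮ ↔ ∀ j, ⟪v j, y⟫ = 0 := by
  rw [Submodule.mem_orthogonal]
  refine ⟨fun h j => h _ (Submodule.subset_span ⟨j, rfl⟩), fun h p hp => ?_⟩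
  have hle : Submodule.span ℝ (Set.range v) ≤ (ℝ ∙ y)ᗮ := Submodule.span_le.mpr <|
    Set.range_subset_iff.mpr fun j => Submodule.mem_orthogonal_singleton_iff_inner_left.mpr (h j)
  exact Submodule.mem_orthogonal_singleton_iff_inner_left.mp (hle hp)

variable [Fintype ι] [DecidableEq ι]

def dualFamily (u : ι → E) : ι → E := mulMatrix u (gram ℝ u)⁻¹

lemma isUnit_det_gram {u : ι → E} (hu : LinearIndependent ℝ u) : IsUnit (gram ℝ u).det :=
  (posDef_gram_of_linearIndependent hu).det_pos.ne'.isUnit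

lemma inner_dualFamily {u : ι → E} (hu : LinearIndependent ℝ u) (j k : ι) :
    ⟪u j, dualFamily u k⟫ = (1 : Matrix ι ι ℝ) j k := by
  rw [dualFamily, inner_mulMatrix_right, mul_nonsing_inv _ (isUnit_det_gram hu)]

lemma gram_dualFamily {u : ι → E} (hu : LinearIndependent ℝ u) :
    gram ℝ (dualFamily u) = (gram ℝ u)⁻¹ := by
  rw [dualFamily, gram_mulMatrix, transpose_nonsing_inv, gram_transpose,
    nonsing_inv_mul _ (isUnit_det_gram hu), Matrix.one_mul]

lemma inner_sum_smul_dualFamily {u : ι → E} (hu : LinearIndependent ℝ u) (c : ι → ℝ) (j : ι) :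
    ⟪u j, ∑ k, c k • dualFamily u k⟫ = c j := by
  simp [inner_sum, real_inner_smul_right, inner_dualFamily hu, one_apply]

lemma eq_sum_inner_smul_dualFamily {u : ι → E} (hu : LinearIndependent ℝ u)
    (hsp : Submodule.span ℝ (Set.range u) = ⊤) (y : E) :
    y = ∑ j, ⟪u j, y⟫ • dualFamily u j :=
  InnerProductSpace.ext_inner_left_basis (Module.Basis.mk hu hsp.ge) fun j => by
    rw [Module.Basis.mk_apply, inner_sum_smul_dualFamily hu]

end DualFamily

section Duality

variable {n : ℕ} {ι κ : Type} [Fintype ι]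

lemma mem_dualLattice_intSpan_iff {v : ι → Euc n} {y : Euc n} :
    y ∈ dualLattice (intSpan v) ↔ ∀ j, ∃ m : ℤ, ⟪v j, y⟫ = m := by
  refine ⟨fun h j => h _ (mem_intSpan_self v j), fun h x ⟨z, hx⟩ => ?_⟩
  choose m hm using h
  exact ⟨∑ j, z j * m j, by simp [hx, sum_inner, real_inner_smul_left, hm]⟩

variable [Fintype κ] [DecidableEq ι] [DecidableEq κ]

lemma dualLattice_intSpan_inter_orthogonal {u : ι ⊕ κ → Euc n} (hu : LinearIndependent ℝ u)
    (hsp : Submodule.span ℝ (Set.range u) = ⊤) :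
    dualLattice (intSpan u) ∩ (Submodule.span ℝ (Set.range (u ∘ Sum.inl)))ᗮ
      = intSpan (dualFamily u ∘ Sum.inr) := by
  ext y
  simp only [Set.mem_inter_iff, mem_dualLattice_intSpan_iff, SetLike.mem_coe,
    mem_orthogonal_span_range_iff, Function.comp_apply]
  constructor
  · rintro ⟨hint, horth⟩
    choose m hm using fun k => hint (Sum.inr k)
    refine ⟨m, ?_⟩
    rw [eq_sum_inner_smul_dualFamily hu hsp y, Fintype.sum_sum_type]
    simp [horth, hm]
  · rintro ⟨z, rfl⟩
    have hy : ∑ k, (z k : ℝ) • dualFamily u (Sum.inr k)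
        = ∑ l, Sum.elim (fun _ => (0 : ℝ)) (fun k => (z k : ℝ)) l • dualFamily u l := by
      simp [Fintype.sum_sum_type]
    simp only [Function.comp_apply, hy, inner_sum_smul_dualFamily hu]
    refine ⟨?_, fun _ => by simp⟩
    rintro (j | k)
    exacts [⟨0, by simp⟩, ⟨z k, by simp⟩]

lemma gramDet_comp_inl {u : ι ⊕ κ → Euc n} (hu : LinearIndependent ℝ u) :
    gramDet (u ∘ Sum.inl) = gramDet (dualFamily u ∘ Sum.inr) * gramDet u := by
  have hA : gram ℝ (u ∘ Sum.inl) = (gram ℝ u).toBlocks₁₁ := rfl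
  have hD : gram ℝ (dualFamily u ∘ Sum.inr) = ((gram ℝ u)⁻¹).toBlocks₂₂ := by
    rw [← gram_dualFamily hu]
    rfl
  change (gram ℝ _).det = (gram ℝ _).det * (gram ℝ u).det
  rw [hA, hD, mul_comm]
  exact det_toBlocks₁₁_eq_det_mul_det_inv_toBlocks₂₂ _ (isUnit_det_gram hu)

lemma latDet_comp_inl {u : ι ⊕ κ → Euc n} (hu : LinearIndependent ℝ u) :
    latDet (u ∘ Sum.inl) = latDet (dualFamily u ∘ Sum.inr) * latDet u := by
  rw [latDet, latDet, latDet, gramDet_comp_inl hu]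
  exact Real.sqrt_mul (posSemidef_gram ℝ (dualFamily u ∘ Sum.inr)).det_nonneg _

end Duality

/-- det(Λ ∩ L) = det(Λ* ∩ L^⊥) · det Λ. -/
theorem stmt0 {n i : ℕ} (Λ : Set (Euc n)) (hΛ : IsLattice Λ)
    (L : Submodule ℝ (Euc n)) (hL : IsLatticePlane Λ i L)
    (v : Fin i → Euc n) (hv : IsZBasis v (Λ ∩ (L : Set (Euc n))))
    (w : Fin (n - i) → Euc n) (hw : IsZBasis w (dualLattice Λ ∩ ((Lᗮ : Submodule ℝ (Euc n)) : Set (Euc n)))) :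
    latDet v = latDet w * detOf n Λ := by
  classical
  obtain ⟨b, rfl⟩ := hΛ
  obtain ⟨u, hu, hu_inl⟩ := exists_zBasis_sum_inl_of_isZBasis b L hv
  have hi : i ≤ n := by simpa using hv.1.fintype_card_le_finrank
  have hsp : Submodule.span ℝ (Set.range u) = ⊤ := by
    rw [← span_intSpan, ← hu.2, span_intSpan, b.span_eq]
  have hL_span : L = Submodule.span ℝ (Set.range (u ∘ Sum.inl)) := by
    rw [← span_intSpan, ← hu_inl.2, hL.2]
  have hw_dual : intSpan w = intSpan (dualFamily u ∘ Sum.inr) := by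
    rw [← hw.2, hu.2, hL_span, dualLattice_intSpan_inter_orthogonal hu.1 hsp]
  rw [detOf_eq_latDet hu (by simp [hi]), ← latDet_eq_of_intSpan_eq hw.1 hw_dual,
    ← latDet_comp_inl hu.1]
  exact latDet_eq_of_intSpan_eq hu_inl.1 (hu_inl.2.symm.trans hv.2)
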